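/- arXiv:math/0609134 — 2 statements merged into one kernel-verified Lean document; each statement's English description precedes it below -/
import Mathlib

section
/- Given non-negative integers m, n, h and k with m ≥ h > 1 and n ≥ k > 1, a pair of non-decreasing sequences A = [a₁, a₂, ..., a_m] and B = [b₁, b₂, ..., b_n] of non-negative integers is the pair of losing score lists of some [h-k]-bipartite hypertournament on vertex sets of sizes m and n if and only if for every p with 1 ≤ p ≤ m and every q with 1 ≤ q ≤ n, ∑_{i=1}^{p} a_i + ∑_{j=1}^{q} b_j ≥ C(p,h)·C(q,k), with equality when p = m and q = n (where C(p,q) denotes the binomial coefficient, taken to be 0 when p < q). -/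
/-- An [h-k]-bipartite hypertournament on vertex sets `Fin m` and `Fin n`:
a set of arcs, each a duplicate-free list (tuple) of vertices with exactly `h`
entries from `U = Fin m` and exactly `k` entries from `V = Fin n`, such that for
every `h`-subset `U₁` of `U` and `k`-subset `V₁` of `V` there is exactly one arc
whose set of entries is `U₁ ∪ V₁`. -/
structure BipartiteHypertournament (m n h k : ℕ) where
  arcs : Finset (List (Fin m ⊕ Fin n))
  nodup : ∀ e ∈ arcs, e.Nodup
  left_count : ∀ e ∈ arcs, (e.filter (fun x => x.isLeft)).length = h
  right_count : ∀ e ∈ arcs, (e.filter (fun x => x.isRight)).length = k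
  complete : ∀ (U₁ : Finset (Fin m)) (V₁ : Finset (Fin n)), U₁.card = h → V₁.card = k →
    ∃! e, e ∈ arcs ∧ e.toFinset = U₁.image Sum.inl ∪ V₁.image Sum.inr

/-- The losing score of a vertex `w`: the number of arcs containing `w` in which
`w` is the last entry. -/
def losingScore {m n h k : ℕ} (H : BipartiteHypertournament m n h k)
    (w : Fin m ⊕ Fin n) : ℕ :=
  (H.arcs.filter (fun e => e.getLast? = some w)).card

/-- `a` (on indices `< m`) and `b` (on indices `< n`) list, up to order, the losing
scores of the vertices of `U` and of `V` respectively. -/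
def IsLosingScoreLists (m n h k : ℕ) (a b : ℕ → ℕ) : Prop :=
  ∃ (H : BipartiteHypertournament m n h k) (σ : Equiv.Perm (Fin m)) (τ : Equiv.Perm (Fin n)),
    (∀ i : Fin m, a i.val = losingScore H (Sum.inl (σ i))) ∧
    (∀ j : Fin n, b j.val = losingScore H (Sum.inr (τ j)))


/-!
Necessity: if `|U₀| = p` and `|V₀| = q`, the `C(p,h)·C(q,k)` arcs inside `U₀ ∪ V₀` are all lost
by vertices of `U₀ ∪ V₀`; choosing for `U₀`, `V₀` the vertices with the `p`, resp. `q`, smallest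
scores gives the inequalities, and counting all arcs gives the equality.

Sufficiency: it is enough to pick a loser in every vertex set `U₁ ∪ V₁` so that each vertex `w`
is picked exactly as often as its prescribed score `c w`; the arc then lists `U₁ ∪ V₁` ending with
its loser. Hall's theorem, applied to `c w` copies of each vertex `w`, yields a choice picking
each `w` at most `c w` times, provided any `t` vertex sets span a set `S` of total score at least
`t`. This follows from the inequalities: `t ≤ C(|S ∩ U|,h)·C(|S ∩ V|,k)`, and by monotonicity
prefix sums are the smallest subset sums. Since the scores add up to the number of arcs, every
bound `c w` is attained.
-/

open Finset

section Lists

variable {α β : Type*}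

lemma image_inl_union_image_inr [DecidableEq α] [DecidableEq β] (s : Finset α) (t : Finset β) :
    s.image Sum.inl ∪ t.image Sum.inr = s.disjSum t := by
  ext (x | x) <;> simp

lemma card_toLeft_toFinset [DecidableEq α] [DecidableEq β] {l : List (α ⊕ β)} (hl : l.Nodup) :
    #l.toFinset.toLeft = (l.filter (·.isLeft)).length := by
  rw [← List.toFinset_card_of_nodup (hl.filter _), ← card_map .inl]
  congr 1
  ext (x | x) <;> simp

lemma card_toRight_toFinset [DecidableEq α] [DecidableEq β] {l : List (α ⊕ β)} (hl : l.Nodup) :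
    #l.toFinset.toRight = (l.filter (·.isRight)).length := by
  rw [← List.toFinset_card_of_nodup (hl.filter _), ← card_map .inr]
  congr 1
  ext (x | x) <;> simp

noncomputable def listEndingWith [DecidableEq α] (s : Finset α) (w : α) : List α :=
  (s.erase w).toList ++ [w]

variable [DecidableEq α] {s : Finset α} {w : α}

lemma nodup_listEndingWith : (listEndingWith s w).Nodup :=
  List.nodup_append.2 ⟨s.erase w |>.nodup_toList, List.nodup_singleton w,
    fun x hx y hy => by simp_all⟩

lemma toFinset_listEndingWith (hw : w ∈ s) : (listEndingWith s w).toFinset = s := by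
  rw [listEndingWith, List.toFinset_append, toList_toFinset]
  simpa [union_comm, ← insert_eq] using insert_erase hw

lemma getLast?_listEndingWith : (listEndingWith s w).getLast? = some w :=
  List.getLast?_concat

end Lists

lemma sum_range_card_le_sum {M : ℕ} {a : ℕ → ℕ} (ha : ∀ i j, i ≤ j → j < M → a i ≤ a j)
    (S : Finset (Fin M)) : ∑ i ∈ range #S, a i ≤ ∑ s ∈ S, a s := by
  induction S using Finset.induction_on_max with
  | empty => simp
  | insert x S hlt ih =>
    have hx : x ∉ S := fun hx => (hlt x hx).false
    have hcard : #S ≤ x := by simpa using card_le_card fun y hy => mem_Iio.2 (hlt y hy)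
    rw [card_insert_of_notMem hx, sum_range_succ, sum_insert hx, add_comm (a x)]
    exact add_le_add ih (ha _ _ hcard x.isLt)

section Hall

variable {ι α : Type*} [Fintype ι] [DecidableEq α]

theorem exists_mem_card_fiber_le (t : ι → Finset α) (c : α → ℕ)
    (hall : ∀ s : Finset ι, #s ≤ ∑ w ∈ s.biUnion t, c w) :
    ∃ f : ι → α, (∀ x, f x ∈ t x) ∧ ∀ w, #{x | f x = w} ≤ c w := by
  -- replace each `w` by `c w` copies `⟨w, i⟩` and apply Hall's marriage theorem
  let copies (s : Finset α) : Finset (Σ _ : α, ℕ) := s.sigma fun w => range (c w)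
  have hcopies (s : Finset ι) : s.biUnion (fun x => copies (t x)) = copies (s.biUnion t) := by
    ext ⟨w, i⟩
    simp [copies]
    tauto
  obtain ⟨g, hg_inj, hg⟩ := (all_card_le_biUnion_card_iff_exists_injective
    fun x => copies (t x)).1 fun s => by simpa [hcopies, copies] using hall s
  simp only [copies, mem_sigma, mem_range] at hg
  refine ⟨fun x => (g x).1, fun x => (hg x).1, fun w => ?_⟩
  calc #{x | (g x).1 = w} ≤ #(range (c w)) := by
        refine card_le_card_of_injOn (fun x => (g x).2) (fun x hx => ?_) fun x hx y hy hxy => ?_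
        · rw [mem_coe, mem_filter] at hx
          simpa [← hx.2] using (hg x).2
        · rw [mem_coe, mem_filter] at hx hy
          exact hg_inj (Sigma.ext (hx.2.trans hy.2.symm) (heq_of_eq hxy))
    _ = c w := card_range _

theorem exists_mem_card_fiber_eq [Fintype α] (t : ι → Finset α) (c : α → ℕ)
    (hall : ∀ s : Finset ι, #s ≤ ∑ w ∈ s.biUnion t, c w) (hc : ∑ w, c w = Fintype.card ι) :
    ∃ f : ι → α, (∀ x, f x ∈ t x) ∧ ∀ w, #{x | f x = w} = c w := by
  obtain ⟨f, hft, hle⟩ := exists_mem_card_fiber_le t c hall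
  have hsum : ∑ w, #{x | f x = w} = ∑ w, c w := by
    rw [hc, ← card_univ, card_eq_sum_card_fiberwise fun x _ => mem_univ (f x)]
  exact ⟨f, hft, fun w => (sum_eq_sum_iff_of_le fun w _ => hle w).1 hsum w (mem_univ w)⟩

end Hall

namespace BipartiteHypertournament

variable {m n h k : ℕ} (H : BipartiteHypertournament m n h k)

lemma existsUnique_arc {U₁ : Finset (Fin m)} {V₁ : Finset (Fin n)} (hU : #U₁ = h)
    (hV : #V₁ = k) : ∃! e, e ∈ H.arcs ∧ e.toFinset = U₁.disjSum V₁ := by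
  simpa only [image_inl_union_image_inr] using H.complete U₁ V₁ hU hV

lemma card_toLeft_arc {e : List (Fin m ⊕ Fin n)} (he : e ∈ H.arcs) : #e.toFinset.toLeft = h := by
  rw [card_toLeft_toFinset (H.nodup e he), H.left_count e he]

lemma card_toRight_arc {e : List (Fin m ⊕ Fin n)} (he : e ∈ H.arcs) :
    #e.toFinset.toRight = k := by
  rw [card_toRight_toFinset (H.nodup e he), H.right_count e he]

lemma arc_eq_of_toFinset_eq {e₁ e₂ : List (Fin m ⊕ Fin n)} (he₁ : e₁ ∈ H.arcs)
    (he₂ : e₂ ∈ H.arcs) (he : e₁.toFinset = e₂.toFinset) : e₁ = e₂ :=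
  (H.existsUnique_arc (H.card_toLeft_arc he₁) (H.card_toRight_arc he₁)).unique
    ⟨he₁, toLeft_disjSum_toRight.symm⟩ ⟨he₂, he ▸ toLeft_disjSum_toRight.symm⟩

lemma ne_nil_of_mem_arcs (hh : 0 < h) {e : List (Fin m ⊕ Fin n)} (he : e ∈ H.arcs) : e ≠ [] := by
  rintro rfl
  simpa [hh.ne] using H.left_count [] he

/-- Arcs inside `U₀ ∪ V₀` correspond to pairs of an `h`-subset of `U₀` and a `k`-subset of `V₀`. -/
theorem card_arcs_subset (U₀ : Finset (Fin m)) (V₀ : Finset (Fin n)) :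
    #{e ∈ H.arcs | e.toFinset ⊆ U₀.disjSum V₀} = (#U₀).choose h * (#V₀).choose k := by
  rw [← card_powersetCard, ← card_powersetCard, ← card_product]
  refine card_nbij (fun e => (e.toFinset.toLeft, e.toFinset.toRight)) (fun e he => ?_)
    (fun e₁ he₁ e₂ he₂ he => ?_) fun ⟨U₁, V₁⟩ hUV => ?_
  · rw [mem_coe, mem_filter, subset_disjSum] at he
    simp [he.2, H.card_toLeft_arc he.1, H.card_toRight_arc he.1]
  · rw [mem_coe, mem_filter] at he₁ he₂
    refine H.arc_eq_of_toFinset_eq he₁.1 he₂.1 ?_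
    rw [← toLeft_disjSum_toRight (u := e₁.toFinset), ← toLeft_disjSum_toRight (u := e₂.toFinset)]
    simp_all
  · simp only [coe_product, Set.mem_prod, mem_coe, mem_powersetCard] at hUV
    obtain ⟨e, ⟨he, heUV⟩, -⟩ := H.existsUnique_arc hUV.1.2 hUV.2.2
    refine ⟨e, ?_, by simp [heUV]⟩
    simpa [he, heUV] using disjSum_mono hUV.1.1 hUV.2.1

lemma card_arcs : #H.arcs = m.choose h * n.choose k := by
  simpa using H.card_arcs_subset univ univ

lemma sum_losingScore (S : Finset (Fin m ⊕ Fin n)) :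
    ∑ w ∈ S, losingScore H w = #{e ∈ H.arcs | e.getLast? ∈ S.map .some} := by
  rw [← sum_card_fiberwise_eq_card_filter, sum_map]
  rfl

theorem choose_mul_choose_le_sum_losingScore (hh : 0 < h) (U₀ : Finset (Fin m))
    (V₀ : Finset (Fin n)) :
    (#U₀).choose h * (#V₀).choose k ≤ ∑ w ∈ U₀.disjSum V₀, losingScore H w := by
  rw [← H.card_arcs_subset, sum_losingScore]
  refine card_le_card fun e he => ?_
  rw [mem_filter] at he ⊢
  have hne := H.ne_nil_of_mem_arcs hh he.1
  refine ⟨he.1, ?_⟩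
  rw [List.getLast?_eq_some_getLast hne]
  exact mem_map_of_mem _ (he.2 (List.mem_toFinset.2 (List.getLast_mem hne)))

theorem sum_losingScore_univ (hh : 0 < h) : ∑ w, losingScore H w = m.choose h * n.choose k := by
  refine le_antisymm ?_ ?_
  · rw [sum_losingScore, ← H.card_arcs]
    exact card_filter_le _ _
  · simpa using H.choose_mul_choose_le_sum_losingScore hh univ univ

end BipartiteHypertournament

lemma exists_card_eq_sum_range_eq {α : Type*} {M p : ℕ} {a : ℕ → ℕ} {g : α → ℕ} (e : Fin M ↪ α)
    (hae : ∀ i : Fin M, a i = g (e i)) (hp : p ≤ M) :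
    ∃ s : Finset α, #s = p ∧ ∑ i ∈ range p, a i = ∑ x ∈ s, g x :=
  ⟨univ.map ((Fin.castLEEmb hp).trans e), by simp, by
    rw [sum_map, ← Fin.sum_univ_eq_sum_range]
    simp [← hae]⟩

namespace IsLosingScoreLists

variable {m n h k : ℕ} {a b : ℕ → ℕ}

theorem choose_mul_choose_le (hL : IsLosingScoreLists m n h k a b) (hh : 0 < h) {p q : ℕ}
    (hp : p ≤ m) (hq : q ≤ n) :
    p.choose h * q.choose k ≤ ∑ i ∈ range p, a i + ∑ j ∈ range q, b j := by
  obtain ⟨H, σ, τ, hσ, hτ⟩ := hL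
  obtain ⟨U₀, rfl, hU₀⟩ :=
    exists_card_eq_sum_range_eq (g := fun u => losingScore H (.inl u)) σ.toEmbedding hσ hp
  obtain ⟨V₀, rfl, hV₀⟩ :=
    exists_card_eq_sum_range_eq (g := fun v => losingScore H (.inr v)) τ.toEmbedding hτ hq
  rw [hU₀, hV₀, ← sum_disjSum]
  exact H.choose_mul_choose_le_sum_losingScore hh U₀ V₀

theorem sum_range_add_sum_range (hL : IsLosingScoreLists m n h k a b) (hh : 0 < h) :
    ∑ i ∈ range m, a i + ∑ j ∈ range n, b j = m.choose h * n.choose k := by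
  obtain ⟨H, σ, τ, hσ, hτ⟩ := hL
  rw [← H.sum_losingScore_univ hh, Fintype.sum_sum_type, ← Fin.sum_univ_eq_sum_range,
    ← Fin.sum_univ_eq_sum_range]
  simp only [hσ, hτ]
  rw [Equiv.sum_comp σ fun u => losingScore H (.inl u),
    Equiv.sum_comp τ fun v => losingScore H (.inr v)]

end IsLosingScoreLists

/-- The vertex sets of the arcs of an [h-k]-bipartite hypertournament, as pairs `(U₁, V₁)`. -/
def subsetPairs (m n h k : ℕ) : Finset (Finset (Fin m) × Finset (Fin n)) :=
  univ.powersetCard h ×ˢ univ.powersetCard k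

section SubsetPairs

variable {m n h k : ℕ}

lemma card_subsetPairs (x : subsetPairs m n h k) : #x.1.1 = h ∧ #x.1.2 = k := by
  simpa [subsetPairs] using x.2

lemma card_subsetPairs_univ :
    Fintype.card (subsetPairs m n h k) = m.choose h * n.choose k := by
  rw [Fintype.card_coe, subsetPairs, card_product, card_powersetCard, card_powersetCard,
    card_univ, card_univ, Fintype.card_fin, Fintype.card_fin]

/-- A hypertournament is determined by choosing the last vertex of each arc. -/
theorem exists_losingScore_eq_card_fiber (loser : subsetPairs m n h k → Fin m ⊕ Fin n)
    (hloser : ∀ x, loser x ∈ x.1.1.disjSum x.1.2) :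
    ∃ H : BipartiteHypertournament m n h k, ∀ w, losingScore H w = #{x | loser x = w} := by
  let arc (x : subsetPairs m n h k) := listEndingWith (x.1.1.disjSum x.1.2) (loser x)
  have hnodup (x) : (arc x).Nodup := nodup_listEndingWith
  have harc (x) : (arc x).toFinset = x.1.1.disjSum x.1.2 := toFinset_listEndingWith (hloser x)
  have harc_eq {x U₁ V₁} (hx : (arc x).toFinset = U₁.disjSum V₁) : x.1 = (U₁, V₁) := by
    rw [harc, disjSum_inj] at hx
    exact Prod.ext hx.1 hx.2
  have harc_inj : Function.Injective arc := fun x y hxy =>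
    Subtype.ext (harc_eq (hxy ▸ harc y))
  refine ⟨⟨univ.map ⟨arc, harc_inj⟩, ?_, ?_, ?_, ?_⟩, fun w => ?_⟩
  · exact forall_mem_map.2 fun x _ => hnodup x
  · refine forall_mem_map.2 fun x _ => ?_
    rw [Function.Embedding.coeFn_mk, ← card_toLeft_toFinset (hnodup x), harc, toLeft_disjSum,
      (card_subsetPairs x).1]
  · refine forall_mem_map.2 fun x _ => ?_
    rw [Function.Embedding.coeFn_mk, ← card_toRight_toFinset (hnodup x), harc, toRight_disjSum,
      (card_subsetPairs x).2]
  · intro U₁ V₁ hU hV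
    rw [image_inl_union_image_inr]
    let x : subsetPairs m n h k := ⟨(U₁, V₁), by simp [subsetPairs, hU, hV]⟩
    refine ⟨arc x, ⟨mem_map_of_mem _ (mem_univ x), harc x⟩, ?_⟩
    rintro _ ⟨he, hex⟩
    obtain ⟨y, -, rfl⟩ := mem_map.1 he
    exact congrArg arc (Subtype.ext (harc_eq hex))
  · rw [losingScore, filter_map, card_map]
    simp [arc, getLast?_listEndingWith]

lemma card_le_choose_mul_choose (T : Finset (subsetPairs m n h k)) :
    #T ≤ (#(T.biUnion fun x => x.1.1.disjSum x.1.2).toLeft).choose h *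
      (#(T.biUnion fun x => x.1.1.disjSum x.1.2).toRight).choose k := by
  rw [← card_powersetCard, ← card_powersetCard, ← card_product,
    ← card_map (Function.Embedding.subtype _)]
  refine card_le_card fun y hy => ?_
  obtain ⟨x, hx, rfl⟩ := mem_map.1 hy
  have hsub := disjSum_subset.1 (subset_biUnion_of_mem (fun x => x.1.1.disjSum x.1.2) hx)
  simp [hsub, card_subsetPairs x]

end SubsetPairs

theorem isLosingScoreLists_of_le {m n h k : ℕ} (hh : 0 < h) (hk : 0 < k) {a b : ℕ → ℕ}
    (ha : ∀ i j, i ≤ j → j < m → a i ≤ a j) (hb : ∀ i j, i ≤ j → j < n → b i ≤ b j)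
    (hle : ∀ p q, 1 ≤ p → p ≤ m → 1 ≤ q → q ≤ n →
      p.choose h * q.choose k ≤ ∑ i ∈ range p, a i + ∑ j ∈ range q, b j)
    (hsum : ∑ i ∈ range m, a i + ∑ j ∈ range n, b j = m.choose h * n.choose k) :
    IsLosingScoreLists m n h k a b := by
  let c : Fin m ⊕ Fin n → ℕ := Sum.elim (fun i => a i) fun j => b j
  have hall (T : Finset (subsetPairs m n h k)) :
      #T ≤ ∑ w ∈ T.biUnion (fun x => x.1.1.disjSum x.1.2), c w := by
    set S := T.biUnion fun x => x.1.1.disjSum x.1.2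
    calc #T ≤ (#S.toLeft).choose h * (#S.toRight).choose k := card_le_choose_mul_choose T
      _ ≤ ∑ i ∈ range #S.toLeft, a i + ∑ j ∈ range #S.toRight, b j := by
        rcases (#S.toLeft).eq_zero_or_pos with hp | hp
        · simp [hp, Nat.choose_eq_zero_of_lt hh]
        rcases (#S.toRight).eq_zero_or_pos with hq | hq
        · simp [hq, Nat.choose_eq_zero_of_lt hk]
        exact hle _ _ hp (by simpa using card_le_univ S.toLeft) hq
          (by simpa using card_le_univ S.toRight)
      _ ≤ ∑ i ∈ S.toLeft, a i + ∑ j ∈ S.toRight, b j :=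
        add_le_add (sum_range_card_le_sum ha _) (sum_range_card_le_sum hb _)
      _ = ∑ w ∈ S, c w := by
        rw [← toLeft_disjSum_toRight (u := S), sum_disjSum, toLeft_disjSum, toRight_disjSum]
        rfl
  have hc : ∑ w, c w = Fintype.card (subsetPairs m n h k) := by
    rw [card_subsetPairs_univ, ← hsum, Fintype.sum_sum_type]
    simp [c, Fin.sum_univ_eq_sum_range]
  obtain ⟨loser, hloser, hfiber⟩ := exists_mem_card_fiber_eq _ c hall hc
  obtain ⟨H, hH⟩ := exists_losingScore_eq_card_fiber loser hloser
  exact ⟨H, 1, 1, fun i => ((hH (.inl i)).trans (hfiber _)).symm,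
    fun j => ((hH (.inr j)).trans (hfiber _)).symm⟩

theorem losing_score_lists_iff_general (m n h k : ℕ) (hh : 1 < h)
    (hk : 1 < k) (a b : ℕ → ℕ)
    (ha : ∀ i j, i ≤ j → j < m → a i ≤ a j)
    (hb : ∀ i j, i ≤ j → j < n → b i ≤ b j) :
    IsLosingScoreLists m n h k a b ↔
      ((∀ p q, 1 ≤ p → p ≤ m → 1 ≤ q → q ≤ n →
          Nat.choose p h * Nat.choose q k ≤
            ∑ i ∈ Finset.range p, a i + ∑ j ∈ Finset.range q, b j) ∧
        ∑ i ∈ Finset.range m, a i + ∑ j ∈ Finset.range n, b j =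
          Nat.choose m h * Nat.choose n k) :=
  ⟨fun hL => ⟨fun _ _ _ hp _ hq => hL.choose_mul_choose_le (by omega) hp hq,
      hL.sum_range_add_sum_range (by omega)⟩,
    fun ⟨hle, hsum⟩ => isLosingScoreLists_of_le (by omega) (by omega) ha hb hle hsum⟩

/-- Theorem 2.1: characterization of losing score lists of an [h-k]-bipartite
hypertournament. (Sequences are 0-indexed: `a 0, …, a (m-1)` are `a₁, …, a_m`.) -/
theorem losing_score_lists_iff (m n h k : ℕ) (hh : 1 < h) (hm : h ≤ m)
    (hk : 1 < k) (hn : k ≤ n) (a b : ℕ → ℕ)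
    (ha : ∀ i j, i ≤ j → j < m → a i ≤ a j)
    (hb : ∀ i j, i ≤ j → j < n → b i ≤ b j) :
    IsLosingScoreLists m n h k a b ↔
      ((∀ p q, 1 ≤ p → p ≤ m → 1 ≤ q → q ≤ n →
          Nat.choose p h * Nat.choose q k ≤
            ∑ i ∈ Finset.range p, a i + ∑ j ∈ Finset.range q, b j) ∧
        ∑ i ∈ Finset.range m, a i + ∑ j ∈ Finset.range n, b j =
          Nat.choose m h * Nat.choose n k) :=
  losing_score_lists_iff_general m n h k hh hk a b ha hb
end

section
/- Given positive integers m and n, a pair of non-decreasing sequences A = [a₁, a₂, ..., a_m] and B = [b₁, b₂, ..., b_n] of non-negative integers is the pair of losing score lists of some bipartite tournament on vertex sets of sizes m and n if and only if for every p with 1 ≤ p ≤ m and every q with 1 ≤ q ≤ n, ∑_{i=1}^{p} a_i + ∑_{j=1}^{q} b_j ≥ p·q, with equality when p = m and q = n. -/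
/-- A bipartite tournament on vertex sets `Fin m` and `Fin n` is an orientation
of the complete bipartite graph: `o u v = true` means the arc `u → v` is present,
and `o u v = false` means the arc `v → u` is present. -/
def losingScoreU {m n : ℕ} (o : Fin m → Fin n → Bool) (u : Fin m) : ℕ :=
  (Finset.univ.filter (fun v : Fin n => o u v = false)).card

/-- The losing score (in-degree) of a vertex `v ∈ V` in the bipartite tournament
given by the orientation `o`. -/
def losingScoreV {m n : ℕ} (o : Fin m → Fin n → Bool) (v : Fin n) : ℕ :=
  (Finset.univ.filter (fun u : Fin m => o u v = true)).card

/-- `a` (on indices `< m`) and `b` (on indices `< n`) list, up to order, the losing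
scores (in-degrees) of the vertices of `U` and of `V` in some bipartite
tournament. -/
def IsBipartiteLosingScoreLists (m n : ℕ) (a b : ℕ → ℕ) : Prop :=
  ∃ (o : Fin m → Fin n → Bool) (σ : Equiv.Perm (Fin m)) (τ : Equiv.Perm (Fin n)),
    (∀ i : Fin m, a i.val = losingScoreU o (σ i)) ∧
    (∀ j : Fin n, b j.val = losingScoreV o (τ j))

/-!
Double counting the arcs between `S ⊆ U` and `T ⊆ V` gives `|S|·|T| ≤ ∑_S a + ∑_T b` for all
subsets, with equality for `S = U`, `T = V`. For sorted sequences the prefixes minimize these sums,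
so this subset condition is equivalent to the stated one.

Conversely, induct on `|V|`. A vertex `v ∈ V` with losing score `β` has `β ≤ m`; let it beat the
`m - β` vertices of `U` with the largest losing scores and lower each of those by one. The subset
condition survives: if every vertex beaten by `v` has losing score `> |T|`, shrink `S` to the
vertices not beaten by `v`; otherwise every vertex not beaten by `v` has losing score `≤ |T|`, and
we may add all of them to `S` and `v` to `T`.
-/

open Finset

variable {m n : ℕ}

def HasLosingScores (o : Fin m → Fin n → Bool) (a : Fin m → ℕ) (b : Fin n → ℕ) : Prop :=
  (∀ u, losingScoreU o u = a u) ∧ ∀ v, losingScoreV o v = b v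

def BipartiteScoreCondition (a : Fin m → ℕ) (b : Fin n → ℕ) : Prop :=
  (∀ S T, #S * #T ≤ ∑ u ∈ S, a u + ∑ v ∈ T, b v) ∧ ∑ u, a u + ∑ v, b v = m * n

theorem card_mul_card_eq_sum_card_filter (o : Fin m → Fin n → Bool) (S : Finset (Fin m))
    (T : Finset (Fin n)) :
    #S * #T = ∑ u ∈ S, #{v ∈ T | o u v = false} + ∑ v ∈ T, #{u ∈ S | o u v = true} := by
  have hswap := sum_card_bipartiteAbove_eq_sum_card_bipartiteBelow (s := S) (t := T)
    (fun u v => o u v = true)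
  simp only [bipartiteAbove, bipartiteBelow] at hswap
  rw [← hswap, ← sum_add_distrib, card_eq_sum_ones S, sum_mul, one_mul]
  refine sum_congr rfl fun u _ => ?_
  rw [add_comm, ← card_filter_add_card_filter_not (s := T) (fun v => o u v = true)]
  simp

theorem card_mul_card_le_sum_losingScore (o : Fin m → Fin n → Bool) (S : Finset (Fin m))
    (T : Finset (Fin n)) :
    #S * #T ≤ ∑ u ∈ S, losingScoreU o u + ∑ v ∈ T, losingScoreV o v := by
  rw [card_mul_card_eq_sum_card_filter o]
  gcongr <;> exact card_le_card (filter_subset_filter _ (subset_univ _))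

theorem sum_losingScoreU_add_sum_losingScoreV (o : Fin m → Fin n → Bool) :
    ∑ u, losingScoreU o u + ∑ v, losingScoreV o v = m * n := by
  simpa [losingScoreU, losingScoreV] using (card_mul_card_eq_sum_card_filter o univ univ).symm

theorem HasLosingScores.bipartiteScoreCondition {o : Fin m → Fin n → Bool} {a : Fin m → ℕ}
    {b : Fin n → ℕ} (h : HasLosingScores o a b) : BipartiteScoreCondition a b := by
  obtain ⟨rfl, rfl⟩ : losingScoreU o = a ∧ losingScoreV o = b := ⟨funext h.1, funext h.2⟩
  exact ⟨card_mul_card_le_sum_losingScore o, sum_losingScoreU_add_sum_losingScoreV o⟩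

theorem exists_card_eq_forall_le {α β : Type*} [Fintype α] [DecidableEq α] [LinearOrder β]
    (f : α → β) {k : ℕ} (hk : k ≤ Fintype.card α) :
    ∃ D : Finset α, #D = k ∧ ∀ x ∈ D, ∀ y ∉ D, f y ≤ f x := by
  induction k with
  | zero => exact ⟨∅, rfl, by simp⟩
  | succ k ih =>
    obtain ⟨D, hD, hmax⟩ := ih (by omega)
    have hne : Dᶜ.Nonempty := by
      rw [← card_pos, card_compl]; omega
    obtain ⟨x, hx, hxmax⟩ := exists_max_image Dᶜ f hne
    refine ⟨insert x D, by rw [card_insert_of_notMem (by simpa using hx), hD], ?_⟩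
    simp only [mem_insert, not_or, forall_eq_or_imp]
    exact ⟨fun y hy => hxmax y (by simpa using hy.2), fun z hz y hy => hmax z hz y hy.2⟩

theorem card_mul_le_add_iff_sum_sub_le {α : Type*} (S : Finset α) (f : α → ℕ) (q B : ℕ) :
    #S * q ≤ ∑ u ∈ S, f u + B ↔ ∑ u ∈ S, ((q : ℤ) - f u) ≤ B := by
  rw [sum_sub_distrib, sum_const, nsmul_eq_mul, ← Nat.cast_le (α := ℤ)]
  push_cast
  constructor <;> intro h <;> linarith

namespace BipartiteScoreCondition

variable {a : Fin m → ℕ}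

theorem le_card {b : Fin n → ℕ} (h : BipartiteScoreCondition a b) (v : Fin n) : b v ≤ m := by
  obtain ⟨n, rfl⟩ : ∃ k, n = k + 1 := ⟨n - 1, by have := v.pos; omega⟩
  have hbound := h.1 univ (univ.erase v)
  rw [card_erase_of_mem (mem_univ v), card_univ, card_univ, Fintype.card_fin,
    Fintype.card_fin, add_tsub_cancel_right] at hbound
  have htotal := h.2
  rw [← add_sum_erase univ b (mem_univ v)] at htotal
  linarith

theorem pos_of_mem {b : Fin n → ℕ} (h : BipartiteScoreCondition a b) {v : Fin n}
    {D : Finset (Fin m)} (hD : ∀ x ∈ D, ∀ y ∉ D, a y ≤ a x) (hcard : #D + b v = m) :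
    ∀ u ∈ D, 0 < a u := by
  intro u hu
  by_contra! hau
  have hzero : ∀ y ∈ insert u Dᶜ, a y = 0 := by
    simp only [mem_insert, mem_compl]
    rintro y (rfl | hy)
    · omega
    · have := hD u hu y hy; omega
  have hbound := h.1 (insert u Dᶜ) {v}
  rw [sum_eq_zero hzero, card_insert_of_notMem (by simpa using hu), card_compl,
    Fintype.card_fin, card_singleton, sum_singleton, mul_one, zero_add] at hbound
  omega

variable {a' : Fin m → ℕ} {b : Fin (n + 1) → ℕ} {D : Finset (Fin m)}

theorem card_mul_card_le_of_compl_subset (h : BipartiteScoreCondition a b)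
    (hcard : #D + b (Fin.last n) = m) (ha : ∀ u, a u = a' u + if u ∈ D then 1 else 0)
    {S : Finset (Fin m)} (hS : Dᶜ ⊆ S) (T : Finset (Fin n)) :
    #S * #T ≤ ∑ u ∈ S, a' u + ∑ v ∈ T, b v.castSucc := by
  have hbound := h.1 S ((T.map Fin.castSuccEmb).cons (Fin.last n) (by simp))
  rw [card_cons, card_map, sum_cons, sum_map] at hbound
  simp only [ha, sum_add_distrib, sum_boole, Nat.cast_id] at hbound
  have hout : S.filter (· ∉ D) = Dᶜ := by
    ext u
    simp only [mem_filter, mem_compl]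
    exact ⟨And.right, fun hu => ⟨hS (by simpa), hu⟩⟩
  have hsplit := card_filter_add_card_filter_not (s := S) (· ∈ D)
  rw [hout, card_compl, Fintype.card_fin, show m - #D = b (Fin.last n) by omega] at hsplit
  rw [mul_add, mul_one] at hbound
  simp only [Fin.coe_castSuccEmb] at hbound
  linarith

theorem erase_last (h : BipartiteScoreCondition a b) (hD : ∀ x ∈ D, ∀ y ∉ D, a y ≤ a x)
    (hcard : #D + b (Fin.last n) = m) (ha : ∀ u, a u = a' u + if u ∈ D then 1 else 0) :
    BipartiteScoreCondition a' fun v => b v.castSucc := by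
  refine ⟨fun S T => ?_, ?_⟩
  · rw [card_mul_le_add_iff_sum_sub_le]
    by_cases hsmall : ∀ y ∉ D, a y ≤ #T
    · refine (sum_le_sum_of_subset_of_nonneg subset_union_left fun u hu huS => ?_).trans
        ((card_mul_le_add_iff_sum_sub_le _ _ _ _).1
          (card_mul_card_le_of_compl_subset h hcard ha subset_union_right T))
      have hu : u ∉ D := by simpa [huS] using hu
      have := hsmall u hu
      simp only [ha u, hu, if_false, add_zero] at this
      omega
    · obtain ⟨y, hy, hqy⟩ := not_forall₂.1 hsmall
      have houtside : ∀ u ∈ S.filter (· ∉ D), a' u = a u := fun u hu => by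
        simp [ha u, (mem_filter.1 hu).2]
      refine (sum_le_sum_of_subset_of_nonpos' (filter_subset (· ∉ D) S) fun u hu huS => ?_).trans
        ((card_mul_le_add_iff_sum_sub_le _ _ _ _).1 ?_)
      · have hu : u ∈ D := by simpa [hu] using huS
        have := hD u hu y hy
        simp only [ha u, hu, if_true] at this
        omega
      · rw [sum_congr rfl houtside, ← card_map (s := T) Fin.castSuccEmb]
        simpa using h.1 (S.filter (· ∉ D)) (T.map Fin.castSuccEmb)
  · show ∑ u, a' u + ∑ v : Fin n, b v.castSucc = m * n
    have htotal := h.2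
    simp only [ha, sum_add_distrib, sum_boole, Nat.cast_id, Fin.sum_univ_castSucc,
      filter_mem_eq_inter, univ_inter, mul_add, mul_one] at htotal
    omega

end BipartiteScoreCondition

section Snoc

variable (o : Fin m → Fin n → Bool) (c : Fin m → Bool)

theorem losingScoreU_snoc (u : Fin m) :
    losingScoreU (fun u => Fin.snoc (o u) (c u)) u =
      losingScoreU o u + if c u = false then 1 else 0 := by
  simp only [losingScoreU, card_filter, Fin.sum_univ_castSucc, Fin.snoc_castSucc, Fin.snoc_last]

theorem losingScoreV_snoc_castSucc (v : Fin n) :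
    losingScoreV (fun u => Fin.snoc (o u) (c u)) v.castSucc = losingScoreV o v := by
  simp only [losingScoreV, Fin.snoc_castSucc]

theorem losingScoreV_snoc_last :
    losingScoreV (fun u => Fin.snoc (o u) (c u)) (Fin.last n) = #{u | c u = true} := by
  simp only [losingScoreV, Fin.snoc_last]

end Snoc

theorem BipartiteScoreCondition.exists_hasLosingScores :
    ∀ {n : ℕ} {a : Fin m → ℕ} {b : Fin n → ℕ}, BipartiteScoreCondition a b →
      ∃ o, HasLosingScores o a b
  | 0, a, b, h => by
    refine ⟨fun _ v => v.elim0, fun u => ?_, fun v => v.elim0⟩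
    have hzero : ∑ u, a u = 0 := by simpa using h.2
    simp [losingScoreU, (sum_eq_zero_iff.1 hzero) u (mem_univ u)]
  | n + 1, a, b, h => by
    obtain ⟨D, hDcard, hD⟩ := exists_card_eq_forall_le a (k := m - b (Fin.last n)) (by simp)
    have hcard : #D + b (Fin.last n) = m := by have := h.le_card (Fin.last n); omega
    have hpos := h.pos_of_mem hD hcard
    set a' : Fin m → ℕ := fun u => a u - if u ∈ D then 1 else 0
    have ha : ∀ u, a u = a' u + if u ∈ D then 1 else 0 := by
      intro u; by_cases hu : u ∈ D <;> simp [a', hu, Nat.sub_add_cancel (hpos u _)]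
    obtain ⟨o, hoa, hob⟩ := (h.erase_last hD hcard ha).exists_hasLosingScores
    refine ⟨fun u => Fin.snoc (o u) (decide (u ∉ D)), fun u => ?_, Fin.lastCases ?_ fun v => ?_⟩
    · rw [losingScoreU_snoc, hoa, ha]
      simp
    · rw [losingScoreV_snoc_last]
      simp only [decide_eq_true_eq, ← compl_filter, filter_mem_eq_inter, univ_inter, card_compl,
        Fintype.card_fin]
      omega
    · rw [losingScoreV_snoc_castSucc, hob]

theorem exists_hasLosingScores_iff {a : Fin m → ℕ} {b : Fin n → ℕ} :
    (∃ o, HasLosingScores o a b) ↔ BipartiteScoreCondition a b :=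
  ⟨fun ⟨_, ho⟩ => ho.bipartiteScoreCondition, BipartiteScoreCondition.exists_hasLosingScores⟩

theorem losingScoreU_comp_equiv (o : Fin m → Fin n → Bool) (σ : Fin m ≃ Fin m)
    (τ : Fin n ≃ Fin n) (u : Fin m) :
    losingScoreU (fun u v => o (σ u) (τ v)) u = losingScoreU o (σ u) := by
  simp only [losingScoreU, card_filter]
  exact τ.sum_comp fun v => if o (σ u) v = false then 1 else 0

theorem losingScoreV_comp_equiv (o : Fin m → Fin n → Bool) (σ : Fin m ≃ Fin m)
    (τ : Fin n ≃ Fin n) (v : Fin n) :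
    losingScoreV (fun u v => o (σ u) (τ v)) v = losingScoreV o (τ v) := by
  simp only [losingScoreV, card_filter]
  exact σ.sum_comp fun u => if o u (τ v) = true then 1 else 0

theorem isBipartiteLosingScoreLists_iff {a b : ℕ → ℕ} :
    IsBipartiteLosingScoreLists m n a b ↔
      ∃ o, HasLosingScores o (fun i : Fin m => a i) (fun j : Fin n => b j) := by
  constructor
  · rintro ⟨o, σ, τ, hσ, hτ⟩
    refine ⟨fun u v => o (σ u) (τ v), fun u => ?_, fun v => ?_⟩
    · exact (losingScoreU_comp_equiv o σ τ u).trans (hσ u).symm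
    · exact (losingScoreV_comp_equiv o σ τ v).trans (hτ v).symm
  · rintro ⟨o, hoa, hob⟩
    exact ⟨o, 1, 1, fun u => (hoa u).symm, fun v => (hob v).symm⟩

theorem sum_range_card_le_sum_of_monotoneOn {M : Type*} [AddCommMonoid M] [PartialOrder M]
    [IsOrderedAddMonoid M] {f : ℕ → M} (hf : MonotoneOn f (Set.Iio m)) {s : Finset ℕ}
    (hs : s ⊆ range m) : ∑ i ∈ range #s, f i ≤ ∑ i ∈ s, f i := by
  induction s using Finset.induction_on_max with
  | empty => simp
  | insert x s hlt ih =>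
    have hx : x < m := by simpa using hs (mem_insert_self x s)
    have hxs : x ∉ s := fun h => lt_irrefl x (hlt x h)
    have hcard : #s ≤ x := by simpa using card_le_card (fun y hy => mem_range.2 (hlt y hy))
    rw [card_insert_of_notMem hxs, sum_range_succ, sum_insert hxs, add_comm (f x)]
    exact add_le_add (ih ((subset_insert x s).trans hs))
      (hf (Set.mem_Iio.2 (hcard.trans_lt hx)) (Set.mem_Iio.2 hx) hcard)

theorem sum_eq_sum_map_valEmbedding {M : Type*} [AddCommMonoid M] (S : Finset (Fin m))
    (f : ℕ → M) : ∑ i ∈ S, f i = ∑ i ∈ S.map Fin.valEmbedding, f i := by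
  simp [sum_map]

theorem map_valEmbedding_subset_range (S : Finset (Fin m)) :
    S.map Fin.valEmbedding ⊆ range m := by
  intro i
  simp only [mem_map, Fin.valEmbedding_apply, mem_range]
  rintro ⟨j, -, rfl⟩
  exact j.2

theorem map_valEmbedding_filter_val_lt {p : ℕ} (hp : p ≤ m) :
    ({i | i.val < p} : Finset (Fin m)).map Fin.valEmbedding = range p := by
  ext i
  simp only [mem_map, mem_filter, mem_univ, true_and, Fin.valEmbedding_apply, mem_range]
  exact ⟨by rintro ⟨j, hj, rfl⟩; exact hj, fun hi => ⟨⟨i, by omega⟩, hi, rfl⟩⟩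

theorem le_sum_range_add_sum_range {a b : ℕ → ℕ}
    (h : ∀ (S : Finset (Fin m)) (T : Finset (Fin n)), #S * #T ≤ ∑ i ∈ S, a i + ∑ j ∈ T, b j)
    {p q : ℕ} (hp : p ≤ m) (hq : q ≤ n) :
    p * q ≤ ∑ i ∈ range p, a i + ∑ j ∈ range q, b j := by
  simpa [sum_eq_sum_map_valEmbedding, map_valEmbedding_filter_val_lt hp,
    map_valEmbedding_filter_val_lt hq, ← card_map Fin.valEmbedding]
    using h {i | i.val < p} {j | j.val < q}

theorem card_mul_card_le_of_monotoneOn {a b : ℕ → ℕ} (ha : MonotoneOn a (Set.Iio m))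
    (hb : MonotoneOn b (Set.Iio n))
    (h : ∀ p q, 1 ≤ p → p ≤ m → 1 ≤ q → q ≤ n →
      p * q ≤ ∑ i ∈ range p, a i + ∑ j ∈ range q, b j)
    (S : Finset (Fin m)) (T : Finset (Fin n)) :
    #S * #T ≤ ∑ i ∈ S, a i + ∑ j ∈ T, b j := by
  rw [sum_eq_sum_map_valEmbedding, sum_eq_sum_map_valEmbedding,
    ← card_map (s := S) Fin.valEmbedding, ← card_map (s := T) Fin.valEmbedding]
  have hS := map_valEmbedding_subset_range S
  have hT := map_valEmbedding_subset_range T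
  set s := S.map Fin.valEmbedding
  set t := T.map Fin.valEmbedding
  rcases Nat.eq_zero_or_pos #s with hs | hs
  · simp [hs]
  rcases Nat.eq_zero_or_pos #t with ht | ht
  · simp [ht]
  calc #s * #t ≤ ∑ i ∈ range #s, a i + ∑ j ∈ range #t, b j :=
        h _ _ hs ((card_le_card hS).trans_eq (card_range m)) ht
          ((card_le_card hT).trans_eq (card_range n))
    _ ≤ ∑ i ∈ s, a i + ∑ j ∈ t, b j :=
        add_le_add (sum_range_card_le_sum_of_monotoneOn ha hS)
          (sum_range_card_le_sum_of_monotoneOn hb hT)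

theorem bipartiteScoreCondition_iff {a b : ℕ → ℕ} (ha : MonotoneOn a (Set.Iio m))
    (hb : MonotoneOn b (Set.Iio n)) :
    BipartiteScoreCondition (fun i : Fin m => a i) (fun j : Fin n => b j) ↔
      (∀ p q, 1 ≤ p → p ≤ m → 1 ≤ q → q ≤ n →
          p * q ≤ ∑ i ∈ range p, a i + ∑ j ∈ range q, b j) ∧
        ∑ i ∈ range m, a i + ∑ j ∈ range n, b j = m * n := by
  simp only [BipartiteScoreCondition, Fin.sum_univ_eq_sum_range]
  exact and_congr_left fun _ =>
    ⟨fun h _ _ _ hp _ hq => le_sum_range_add_sum_range h hp hq,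
      card_mul_card_le_of_monotoneOn ha hb⟩

theorem bipartite_losing_score_lists_iff_general (m n : ℕ)
    (a b : ℕ → ℕ)
    (ha : ∀ i j, i ≤ j → j < m → a i ≤ a j)
    (hb : ∀ i j, i ≤ j → j < n → b i ≤ b j) :
    IsBipartiteLosingScoreLists m n a b ↔
      ((∀ p q, 1 ≤ p → p ≤ m → 1 ≤ q → q ≤ n →
          p * q ≤ ∑ i ∈ Finset.range p, a i + ∑ j ∈ Finset.range q, b j) ∧
        ∑ i ∈ Finset.range m, a i + ∑ j ∈ Finset.range n, b j = m * n) := by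
  rw [isBipartiteLosingScoreLists_iff, exists_hasLosingScores_iff]
  exact bipartiteScoreCondition_iff (fun i _ j hj hij => ha i j hij hj)
    (fun i _ j hj hij => hb i j hij hj)

/-- (Beineke–Moon) Non-decreasing sequences `a 0, …, a (m-1)` and `b 0, …, b (n-1)`
of non-negative integers are the losing score lists of some bipartite tournament
iff `∑_{i<p} a i + ∑_{j<q} b j ≥ p·q` for all `1 ≤ p ≤ m`, `1 ≤ q ≤ n`, with
equality when `p = m` and `q = n`. -/
theorem bipartite_losing_score_lists_iff (m n : ℕ) (hm : 0 < m) (hn : 0 < n)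
    (a b : ℕ → ℕ)
    (ha : ∀ i j, i ≤ j → j < m → a i ≤ a j)
    (hb : ∀ i j, i ≤ j → j < n → b i ≤ b j) :
    IsBipartiteLosingScoreLists m n a b ↔
      ((∀ p q, 1 ≤ p → p ≤ m → 1 ≤ q → q ≤ n →
          p * q ≤ ∑ i ∈ Finset.range p, a i + ∑ j ∈ Finset.range q, b j) ∧
        ∑ i ∈ Finset.range m, a i + ∑ j ∈ Finset.range n, b j = m * n) :=
  bipartite_losing_score_lists_iff_general m n a b ha hb
end
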